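/- Let A be a parametric timed automaton over the alphabet Σ ⊔ {$}, and define the non-parametric KMP-style skip value Δ′_KMP(ℓ) = min over all parameter valuations v of Δ_KMP(ℓ,{v}). Let w be a timed word over Σ with timestamps τ_1 < … < τ_{|w|}. For all indices 1 ≤ i ≤ j ≤ |w|, every location ℓ of A and every parameter valuation v: if there exists a real t with 0 ≤ t < τ_i and w(i,j) − t ∈ L(A_ℓ[v]), then for every integer n with 1 ≤ n, n < Δ′_KMP(ℓ) and i + n ≤ |w|, the match set M(w,A) contains no triple (t₀,t′,v′) with τ_{i+n−1} ≤ t₀ < τ_{i+n}. -/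

import Mathlib

open scoped Classical NNRat

namespace PTPM

/-- Timed words over an alphabet `α`: finite sequences of (letter, timestamp). -/
abbrev TWord (α : Type*) := List (α × ℝ)

/-- Well-formedness of a timed word: positive, strictly increasing timestamps. -/
def IsTW {α : Type*} (w : TWord α) : Prop :=
  (∀ p ∈ w, 0 < p.2) ∧ w.Chain' (fun p q => p.2 < q.2)

/-- `T(Σ)`: the set of timed words over `α`. -/
def TW (α : Type*) : Set (TWord α) := {w | IsTW w}

/-- `T^n(Σ)`: the set of timed words over `α` of length `n`. -/
def TWn (α : Type*) (n : ℕ) : Set (TWord α) := {w | IsTW w ∧ w.length = n}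

/-- The shift `w + s` of a timed word. -/
def shift {α : Type*} (w : TWord α) (s : ℝ) : TWord α := w.map fun p => (p.1, p.2 + s)

/-- Last timestamp of a timed word (`0` for the empty word). -/
def lastT {α : Type*} (w : TWord α) : ℝ := (w.getLast?.map Prod.snd).getD 0

/-- Non-absorbing concatenation `w · w'`. -/
def ncat {α : Type*} (w w' : TWord α) : TWord α := w ++ shift w' (lastT w)

/-- Non-absorbing concatenation lifted to sets of timed words. -/
def ncatS {α : Type*} (W W' : Set (TWord α)) : Set (TWord α) :=
  {u | ∃ w ∈ W, ∃ w' ∈ W', u = ncat w w'}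

/-- `τ_k`, the `k`-th timestamp (1-indexed), with `τ_0 = 0`. -/
def tau {α : Type*} (w : TWord α) (k : ℕ) : ℝ := lastT (w.take k)

/-- The subsequence `w(i,j)` (1-indexed, both inclusive; empty if `i > j`). -/
def sub {α : Type*} (w : TWord α) (i j : ℕ) : TWord α := (w.take j).drop (i - 1)

/-- Letter at position `k` (1-indexed), if any. -/
def letterAt {α : Type*} (w : TWord α) (k : ℕ) : Option α := w[k - 1]?.map Prod.fst

/-- Embedding of timed words over `Σ` into timed words over `Σ ⊔ {$}`;
the terminal character `$` is modelled by `none`. -/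
def liftW {α : Type*} (w : TWord α) : TWord (Option α) := w.map fun p => (some p.1, p.2)

/-- `T(Σ)` viewed inside the alphabet `Σ ⊔ {$}`. -/
def TWl (α : Type*) : Set (TWord (Option α)) := liftW '' TW α

/-- `T^n(Σ)` viewed inside the alphabet `Σ ⊔ {$}`. -/
def TWln (α : Type*) (n : ℕ) : Set (TWord (Option α)) := liftW '' TWn α n

/-- The segment `w|_(t,t')`, a timed word over `Σ ⊔ {$}`. -/
noncomputable def seg {α : Type*} (w : TWord α) (t t' : ℝ) : TWord (Option α) :=
  (w.filter fun p => decide (t < p.2 ∧ p.2 < t')).map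
      (fun p => ((some p.1 : Option α), p.2 - t))
    ++ [((none : Option α), t' - t)]

/-- `L_{-$}`: the words of `L` with the last element removed. -/
def minusDollar {β : Type*} (L : Set (TWord β)) : Set (TWord β) :=
  {u | ∃ x ∈ L, x ≠ [] ∧ u = x.dropLast}

/-- Untimed projection of a timed word. -/
def untimed {α : Type*} (w : TWord α) : List α := w.map Prod.fst

/-- Untimed projection of a set of timed words. -/
def untimedS {α : Type*} (W : Set (TWord α)) : Set (List α) := untimed '' W

/-- `U · Σ*`: the set of finite words having a prefix in `U`. -/
def prefSet {σ : Type*} (U : Set (List σ)) : Set (List σ) := {x | ∃ u ∈ U, ∃ s, x = u ++ s}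

/-- `Ŷ = {y + s | y ∈ Y, s ≥ 0}`. -/
def hatS {α : Type*} (Y : Set (TWord α)) : Set (TWord α) :=
  {u | ∃ y ∈ Y, ∃ s : ℝ, 0 ≤ s ∧ u = shift y s}

/-- Comparison operators `⋈ ∈ {<, ≤, =, ≥, >}`. -/
inductive Cmp | lt | le | eq | ge | gt

def Cmp.eval : Cmp → ℝ → ℝ → Prop
  | .lt, a, b => a < b
  | .le, a, b => a ≤ b
  | .eq, a, b => a = b
  | .ge, a, b => b ≤ a
  | .gt, a, b => b < a

/-- Atomic guard constraints `x ⋈ d` (`d ∈ ℕ`) and `x ⋈ p` (`p` a parameter). -/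
inductive Atom (C P : Type*)
  | nat (x : C) (op : Cmp) (d : ℕ)
  | par (x : C) (op : Cmp) (p : P)

/-- A guard: a finite conjunction of atomic constraints. -/
abbrev Guard (C P : Type*) := List (Atom C P)

def Atom.sat {C P : Type*} (μ : C → ℝ) (v : P → ℚ≥0) : Atom C P → Prop
  | .nat x op d => op.eval (μ x) (d : ℝ)
  | .par x op p => op.eval (μ x) ((v p : ℚ) : ℝ)

/-- `μ ⊨ v(g)`. -/
def Guard.sat {C P : Type*} (μ : C → ℝ) (v : P → ℚ≥0) (g : Guard C P) : Prop :=
  ∀ a ∈ g, a.sat μ v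

def Atom.mapCP {C P C' P' : Type*} (fc : C → C') (fp : P → P') : Atom C P → Atom C' P'
  | .nat x op d => .nat (fc x) op d
  | .par x op p => .par (fc x) op (fp p)

def Guard.mapCP {C P C' P' : Type*} (fc : C → C') (fp : P → P') (g : Guard C P) :
    Guard C' P' :=
  g.map (Atom.mapCP fc fp)

/-- Parametric timed automaton with alphabet `α`, locations `L`, clocks `C`, parameters `P`.
An edge `(ℓ, g, a, R, ℓ')` has source `ℓ`, guard `g`, action `a`, resets `R`, target `ℓ'`. -/
structure PTA (α L C P : Type*) where
  init : L
  acc : Set L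
  edges : Set (L × Guard C P × α × Set C × L)
  finEdges : edges.Finite

/-- Reset of the clocks in `R` to `0`. -/
noncomputable def resetv {C : Type*} (μ : C → ℝ) (R : Set C) : C → ℝ :=
  fun x => if x ∈ R then 0 else μ x

/-- `Steps A v ℓ μ τ w ℓ'`: from configuration (location `ℓ`, clock valuation `μ`,
absolute time `τ`) there is a run of `A[v]` reading the timed word `w` and ending in `ℓ'`. -/
inductive Steps {α L C P : Type*} (A : PTA α L C P) (v : P → ℚ≥0) :
    L → (C → ℝ) → ℝ → TWord α → L → Prop
  | refl (ℓ : L) (μ : C → ℝ) (τ : ℝ) : Steps A v ℓ μ τ [] ℓ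
  | step {ℓ : L} {μ : C → ℝ} {τ : ℝ} {g : Guard C P} {a : α} {R : Set C} {ℓ' ℓ'' : L}
      {d : ℝ} {w : TWord α}
      (hd : 0 ≤ d)
      (he : (ℓ, g, a, R, ℓ') ∈ A.edges)
      (hg : Guard.sat (fun x => μ x + d) v g)
      (h : Steps A v ℓ' (resetv (fun x => μ x + d) R) (τ + d) w ℓ'') :
      Steps A v ℓ μ τ ((a, τ + d) :: w) ℓ''

/-- The language `L(A[v])`: associated words of accepting runs that are timed words. -/
def lang {α L C P : Type*} (A : PTA α L C P) (v : P → ℚ≥0) : Set (TWord α) :=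
  {w | IsTW w ∧ ∃ ℓ ∈ A.acc, Steps A v A.init (fun _ => 0) 0 w ℓ}

/-- `A_ℓ`: the PTA `A` with accepting set `{ℓ}`. -/
def PTA.locAcc {α L C P : Type*} (A : PTA α L C P) (ℓ : L) : PTA α L C P :=
  { A with acc := {ℓ} }

/-- The match set `M(w, A)`. -/
def matchSet {α L C P : Type*} (w : TWord α) (A : PTA (Option α) L C P) :
    Set (ℝ × ℝ × (P → ℚ≥0)) :=
  {x | 0 ≤ x.1 ∧ x.1 < x.2.1 ∧ seg w x.1 x.2.1 ∈ lang A x.2.2}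

/-- `V_{ℓ,n}`. -/
def Vset {α L C P : Type*} (A : PTA (Option α) L C P) (ℓ : L) (n : ℕ) :
    Set (P → ℚ≥0) :=
  {v | ∃ v' : P → ℚ≥0,
    (ncatS (lang (A.locAcc ℓ) v) (TWl α) ∩
      ncatS (ncatS (TWln α n) (hatS (minusDollar (lang A v')))) (TWl α)).Nonempty}

/-- The KMP-style skip value `Δ_KMP(ℓ, V) = min {n ≥ 1 | V ⊆ V_{ℓ,n}}` (min ∅ = ⊤). -/
noncomputable def DeltaKMP {α L C P : Type*} (A : PTA (Option α) L C P) (ℓ : L)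
    (V : Set (P → ℚ≥0)) : ℕ∞ :=
  sInf ((fun n : ℕ => (n : ℕ∞)) '' {n : ℕ | 1 ≤ n ∧ V ⊆ Vset A ℓ n})

/-- The non-parametric KMP-style skip value `Δ'_KMP(ℓ) = min_v Δ_KMP(ℓ, {v})`. -/
noncomputable def DeltaKMP' {α L C P : Type*} (A : PTA (Option α) L C P) (ℓ : L) : ℕ∞ :=
  ⨅ v : P → ℚ≥0, DeltaKMP A ℓ {v}

/-- Untimed words over `Σ`, viewed inside `Σ ⊔ {$}`. -/
def pureW {α : Type*} (x : List (Option α)) : Prop := ∀ c ∈ x, c ≠ none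

/-- `Σ^n · U` for sets of finite untimed words. -/
def catLen {α : Type*} (n : ℕ) (U : Set (List (Option α))) : Set (List (Option α)) :=
  {y | ∃ x u, x.length = n ∧ pureW x ∧ u ∈ U ∧ y = x ++ u}

/-- `Σ^N a Σ*`: finite words of length at least `N+1` whose `(N+1)`-st letter is `a`. -/
def sigNa {α : Type*} (N : ℕ) (a : α) : Set (List (Option α)) :=
  {x | N + 1 ≤ x.length ∧ x[N]? = some (some a)}

/-- The Quick-Search-style skip value `Δ_QS(a)` (min ∅ = ⊤). -/
noncomputable def DeltaQS {α L C P : Type*} (A : PTA (Option α) L C P) (N : ℕ) (a : α) :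
    ℕ∞ :=
  sInf ((fun n : ℕ => (n : ℕ∞)) '' {n : ℕ | 1 ≤ n ∧ ∃ v : P → ℚ≥0,
    (sigNa N a ∩ catLen n (untimedS (minusDollar (lang A v)))).Nonempty})


section Helpers

theorem isTW_iff {α : Type*} (w : TWord α) :
    IsTW w ↔ (∀ p ∈ w, 0 < p.2) ∧ w.Pairwise (fun p q => p.2 < q.2) := by
  haveI : IsTrans (α × ℝ) (fun p q => p.2 < q.2) := ⟨fun _ _ _ h h' => lt_trans h h'⟩
  unfold IsTW
  rw [show List.Chain' (fun p q : α × ℝ => p.2 < q.2) w = List.IsChain (fun p q : α × ℝ => p.2 < q.2) w from rfl, List.isChain_iff_pairwise]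

theorem shift_append {α : Type*} (a b : TWord α) (s : ℝ) :
    shift (a ++ b) s = shift a s ++ shift b s := List.map_append

theorem shift_shift {α : Type*} (a : TWord α) (s s' : ℝ) :
    shift (shift a s) s' = shift a (s + s') := by
  simp [shift, Function.comp_def, add_assoc]

theorem liftW_append {α : Type*} (a b : TWord α) :
    liftW (a ++ b) = liftW a ++ liftW b := List.map_append

theorem liftW_shift {α : Type*} (a : TWord α) (s : ℝ) :
    liftW (shift a s) = shift (liftW a) s := by
  simp [shift, liftW, Function.comp_def]

theorem lastT_concat {α : Type*} (l : TWord α) (p : α × ℝ) :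
    lastT (l ++ [p]) = p.2 := by
  simp [lastT, List.getLast?_concat]

theorem lastT_shift {α : Type*} (l : TWord α) (h : l ≠ []) (s : ℝ) :
    lastT (shift l s) = lastT l + s := by
  conv_lhs => rw [← List.dropLast_append_getLast h]
  rw [shift_append]
  have h1 : shift [l.getLast h] s = [((l.getLast h).1, (l.getLast h).2 + s)] := rfl
  rw [h1, lastT_concat]
  conv_rhs => rw [← List.dropLast_append_getLast h]
  rw [lastT_concat]

theorem lastT_liftW {α : Type*} (l : TWord α) : lastT (liftW l) = lastT l := by
  rcases eq_or_ne l [] with rfl | h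
  · rfl
  · conv_lhs => rw [← List.dropLast_append_getLast h]
    rw [liftW_append]
    have h1 : liftW [l.getLast h] = [((some (l.getLast h).1 : Option α), (l.getLast h).2)] := rfl
    rw [h1, lastT_concat]
    conv_rhs => rw [← List.dropLast_append_getLast h]
    rw [lastT_concat]

theorem lastT_append_right {α : Type*} (a b : TWord α) (h : b ≠ []) :
    lastT (a ++ b) = lastT b := by
  unfold lastT
  rw [List.getLast?_append_of_ne_nil _ h]

theorem shift_ne_nil {α : Type*} {l : TWord α} (h : l ≠ []) (s : ℝ) : shift l s ≠ [] := by
  simpa [shift] using h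

theorem liftW_ne_nil {α : Type*} {l : TWord α} (h : l ≠ []) : liftW l ≠ [] := by
  simpa [liftW] using h

/-- key suffix lemma: if `a ++ b` is a timed word then `shift b (-(lastT a))` is. -/
theorem isTW_shift_suffix {α : Type*} {a b : TWord α} (h : IsTW (a ++ b)) :
    IsTW (shift b (-(lastT a))) := by
  rw [isTW_iff] at h ⊢
  obtain ⟨hpos, hpair⟩ := h
  rw [List.pairwise_append] at hpair
  constructor
  · intro p hp
    simp only [shift, List.mem_map] at hp
    obtain ⟨q, hq, rfl⟩ := hp
    rcases eq_or_ne a [] with rfl | ha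
    · simp only [lastT, List.getLast?_nil, Option.map_none, Option.getD_none]
      have := hpos q (by simp [hq])
      simpa using this
    · have hla : a.getLast ha ∈ a := List.getLast_mem ha
      have : (a.getLast ha).2 < q.2 := hpair.2.2 _ hla _ hq
      have he : lastT a = (a.getLast ha).2 := by
        conv_lhs => rw [← List.dropLast_append_getLast ha]
        rw [lastT_concat]
      simp only []
      rw [he]
      linarith
  · rw [shift, List.pairwise_map]
    exact hpair.2.1.imp (by intro p q h; simpa using h)

theorem isTW_drop {α : Type*} {w : TWord α} (h : IsTW w) (k : ℕ) : IsTW (w.drop k) := by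
  rw [isTW_iff] at h ⊢
  exact ⟨fun p hp => h.1 p (List.mem_of_mem_drop hp),
    h.2.sublist (List.drop_sublist k w)⟩

theorem mem_drop_ge {α : Type*} {w : TWord α}
    (hpw : w.Pairwise (fun p q => p.2 < q.2)) {k : ℕ} (hk : k < w.length)
    {p : α × ℝ} (hp : p ∈ w.drop k) : (w[k]).2 ≤ p.2 := by
  rw [List.drop_eq_getElem_cons hk] at hp
  have hpd : (w.drop k).Pairwise (fun p q => p.2 < q.2) := hpw.sublist (List.drop_sublist k w)
  rw [List.drop_eq_getElem_cons hk, List.pairwise_cons] at hpd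
  rcases List.mem_cons.1 hp with rfl | hp
  · exact le_refl _
  · exact le_of_lt (hpd.1 p hp)

theorem take_concat {α : Type*} (w : TWord α) {k : ℕ} (hk1 : 1 ≤ k) (hk : k ≤ w.length) :
    w.take k = w.take (k-1) ++ [w[k-1]'(by omega)] := by
  have hk' : k - 1 + 1 = k := by omega
  have hlt : k - 1 < w.length := by omega
  conv_lhs => rw [← hk', List.take_succ]
  rw [List.getElem?_eq_getElem hlt]
  rfl

theorem tau_eq {α : Type*} (w : TWord α) {k : ℕ} (hk1 : 1 ≤ k) (hk : k ≤ w.length) :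
    tau w k = (w[k-1]'(by omega)).2 := by
  unfold tau
  rw [take_concat w hk1 hk, lastT_concat]

theorem mem_take_le {α : Type*} {w : TWord α}
    (hpw : w.Pairwise (fun p q => p.2 < q.2)) {k : ℕ} (hk1 : 1 ≤ k) (hk : k ≤ w.length)
    {p : α × ℝ} (hp : p ∈ w.take k) : p.2 ≤ (w[k-1]'(by omega)).2 := by
  have he := take_concat w hk1 hk
  rw [he] at hp
  have hpt : (w.take k).Pairwise (fun p q => p.2 < q.2) := hpw.sublist (List.take_sublist k w)
  rw [he, List.pairwise_append] at hpt
  rcases List.mem_append.1 hp with hp | hp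
  · exact le_of_lt (hpt.2.2 p hp _ (List.mem_singleton_self _))
  · rw [List.mem_singleton.1 hp]

theorem filter_interval {α : Type*} {w : TWord α}
    (hpw : w.Pairwise (fun p q => p.2 < q.2)) (m : ℕ) (t₀ t' : ℝ)
    (h1 : ∀ p ∈ w.take m, p.2 ≤ t₀) (h2 : ∀ p ∈ w.drop m, t₀ < p.2) :
    w.filter (fun p => decide (t₀ < p.2 ∧ p.2 < t')) =
      (w.drop m).takeWhile (fun p => decide (p.2 < t')) := by
  conv_lhs => rw [← List.take_append_drop m w]
  rw [List.filter_append]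
  have e1 : (w.take m).filter (fun p => decide (t₀ < p.2 ∧ p.2 < t')) = [] := by
    rw [List.filter_eq_nil_iff]
    intro p hp
    simp only [decide_eq_true_eq, not_and]
    intro h
    exact absurd (h1 p hp) (not_le.2 h)
  rw [e1, List.nil_append]
  set r := w.drop m with hr
  set P' : α × ℝ → Bool := fun p => decide (p.2 < t') with hP'
  have e2 : r.filter (fun p => decide (t₀ < p.2 ∧ p.2 < t')) = r.filter P' := by
    apply List.filter_congr
    intro p hp
    simp [hP', h2 p hp]
  rw [e2]
  conv_lhs => rw [← List.takeWhile_append_dropWhile (p := P') (l := r), List.filter_append]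
  have e3 : (r.takeWhile P').filter P' = r.takeWhile P' :=
    List.filter_eq_self.2 (fun p hp => List.mem_takeWhile_imp hp)
  have e4 : (r.dropWhile P').filter P' = [] := by
    rw [List.filter_eq_nil_iff]
    intro p hp
    set d := r.dropWhile P' with hd
    have hdne : d ≠ [] := List.ne_nil_of_mem hp
    have hhead : P' (d.head hdne) = false := List.head_dropWhile_not P' (l := r) hdne
    have hpd : d.Pairwise (fun p q => p.2 < q.2) :=
      (hpw.sublist (List.drop_sublist m w)).sublist (List.dropWhile_sublist P')
    have hcons : d = d.head hdne :: d.tail := (List.cons_head_tail hdne).symm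
    rw [hcons, List.pairwise_cons] at hpd
    have hge : t' ≤ (d.head hdne).2 := by
      simpa [hP'] using hhead
    rcases List.mem_cons.1 (hcons ▸ hp) with rfl | hp'
    · simp [hP']; linarith
    · have := hpd.1 p hp'
      simp [hP']; linarith
  rw [e3, e4, List.append_nil]

theorem drop_split {α : Type*} (w : TWord α) {a b : ℕ} (hab : a ≤ b) (hb : b ≤ w.length) :
    w.drop a = (w.take b).drop a ++ w.drop b := by
  conv_lhs => rw [← List.take_append_drop b w]
  rw [List.drop_append, List.length_take]
  have h0 : a - (b ⊓ w.length) = 0 := by omega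
  rw [h0, List.drop_zero]


theorem sub_length {α : Type*} (w : TWord α) {i k : ℕ} (hk : k ≤ w.length) (hik : i - 1 ≤ k) :
    (sub w i k).length = k - (i-1) := by
  unfold sub
  rw [List.length_drop, List.length_take]
  omega

theorem sub_ne_nil {α : Type*} (w : TWord α) {i k : ℕ} (hi : 1 ≤ i) (hik : i ≤ k)
    (hk : k ≤ w.length) : sub w i k ≠ [] := by
  have h := sub_length w (i := i) hk (by omega)
  intro hnil
  rw [hnil] at h
  simp at h
  omega

theorem sub_sublist {α : Type*} (w : TWord α) (i k : ℕ) : (sub w i k).Sublist w :=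
  (List.drop_sublist _ _).trans (List.take_sublist _ _)

theorem mem_sub_mem_drop {α : Type*} (w : TWord α) (i k : ℕ) {p : α × ℝ} (hp : p ∈ sub w i k) :
    p ∈ w.drop (i-1) := by
  unfold sub at hp
  rw [List.drop_take] at hp
  exact (List.take_sublist _ _).subset hp

theorem tau_eq_lastT_sub {α : Type*} (w : TWord α) {i k : ℕ} (hi : 1 ≤ i) (hik : i ≤ k)
    (hk : k ≤ w.length) : tau w k = lastT (sub w i k) := by
  have hne : sub w i k ≠ [] := sub_ne_nil w hi hik hk
  unfold tau
  conv_lhs => rw [← List.take_append_drop (i-1) (w.take k)]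
  exact lastT_append_right _ _ hne

theorem tau_le_mem_drop {α : Type*} {w : TWord α}
    (hpw : w.Pairwise (fun p q => p.2 < q.2)) {k : ℕ} (hk1 : 1 ≤ k) (hk : k ≤ w.length)
    {p : α × ℝ} (hp : p ∈ w.drop (k-1)) : tau w k ≤ p.2 := by
  rw [tau_eq w hk1 hk]
  exact mem_drop_ge hpw (by omega) hp

theorem mem_take_le_tau {α : Type*} {w : TWord α}
    (hpw : w.Pairwise (fun p q => p.2 < q.2)) {k : ℕ} (hk1 : 1 ≤ k) (hk : k ≤ w.length)
    {p : α × ℝ} (hp : p ∈ w.take k) : p.2 ≤ tau w k := by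
  rw [tau_eq w hk1 hk]
  exact mem_take_le hpw hk1 hk hp

theorem isTW_shift_sub {α : Type*} {w : TWord α} (hw : IsTW w) {i k : ℕ} (hi : 1 ≤ i)
    (hik : i ≤ k) (hk : k ≤ w.length) {t : ℝ} (ht : t < tau w i) :
    IsTW (shift (sub w i k) (-t)) := by
  have hpw : w.Pairwise (fun p q => p.2 < q.2) := ((isTW_iff w).1 hw).2
  rw [isTW_iff]
  constructor
  · intro p hp
    simp only [shift, List.mem_map] at hp
    obtain ⟨p', hp', rfl⟩ := hp
    have h1 : tau w i ≤ p'.2 :=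
      tau_le_mem_drop hpw hi (le_trans hik hk) (mem_sub_mem_drop w i k hp')
    simp only []
    linarith
  · rw [shift, List.pairwise_map]
    exact (hpw.sublist (sub_sublist w i k)).imp (by intro a b h; simpa using h)

theorem drop_eq_sub_append {α : Type*} (w : TWord α) {i k : ℕ} (hik : i - 1 ≤ k)
    (hk : k ≤ w.length) : w.drop (i-1) = sub w i k ++ w.drop k := by
  unfold sub
  exact drop_split w hik hk

theorem ncat_lift {α : Type*} (a b : TWord α) (ha : a ≠ []) (s : ℝ) :
    ncat (liftW (shift a s)) (liftW (shift b (-(lastT a)))) = liftW (shift (a ++ b) s) := by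
  unfold ncat
  rw [lastT_liftW, lastT_shift a ha s, liftW_shift b (-(lastT a)), shift_shift,
    show -(lastT a) + (lastT a + s) = s from by ring, ← liftW_shift b s, ← liftW_append,
    ← shift_append]

end Helpers

/-- correctness of the non-parametric KMP-style skipping. -/
theorem statement5 {α L C P : Type*} [Finite α] [Finite L] [Finite C] [Finite P]
    (A : PTA (Option α) L C P) (w : TWord α) (hw : IsTW w)
    (i j : ℕ) (hi : 1 ≤ i) (hij : i ≤ j) (hj : j ≤ w.length)
    (ℓ : L) (v : P → ℚ≥0)
    (hmatch : ∃ t : ℝ, 0 ≤ t ∧ t < tau w i ∧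
      liftW (shift (sub w i j) (-t)) ∈ lang (A.locAcc ℓ) v) :
    ∀ n : ℕ, 1 ≤ n → (n : ℕ∞) < DeltaKMP' A ℓ → i + n ≤ w.length →
      ∀ (t₀ t' : ℝ) (v' : P → ℚ≥0),
        tau w (i + n - 1) ≤ t₀ → t₀ < tau w (i + n) → (t₀, t', v') ∉ matchSet w A := by
  obtain ⟨t, ht0, hti, hx1⟩ := hmatch
  intro n hn hnD hiN t₀ t' v' ht₀l ht₀r hmem
  obtain ⟨hm0, hmlt, hseg⟩ := hmem
  have hnot : v ∉ Vset A ℓ n := by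
    intro hv
    have h1 : DeltaKMP A ℓ {v} ≤ (n : ℕ∞) :=
      sInf_le ⟨n, ⟨hn, Set.singleton_subset_iff.2 hv⟩, rfl⟩
    have h2 : DeltaKMP' A ℓ ≤ (n : ℕ∞) := le_trans (iInf_le _ v) h1
    exact absurd hnD (not_lt.2 h2)
  apply hnot
  have hpw : w.Pairwise (fun p q => p.2 < q.2) := ((isTW_iff w).1 hw).2
  have hs₀ne : (sub w i (i + n - 1)) ≠ [] := sub_ne_nil w hi (by omega) (by omega)
  have hsjne : sub w i j ≠ [] := sub_ne_nil w hi hij hj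
  have hτm : tau w (i + n - 1) = lastT (sub w i (i + n - 1)) :=
    tau_eq_lastT_sub w hi (by omega) (by omega)
  have h1 : ∀ p ∈ w.take (i + n - 1), p.2 ≤ t₀ := fun p hp =>
    le_trans (mem_take_le_tau hpw (by omega) (by omega) hp) ht₀l
  have h2 : ∀ p ∈ w.drop (i + n - 1), t₀ < p.2 := fun p hp =>
    lt_of_lt_of_le ht₀r (tau_le_mem_drop hpw (by omega) hiN hp)
  have hfilter : w.filter (fun p => decide (t₀ < p.2 ∧ p.2 < t')) = ((w.drop (i + n - 1)).takeWhile (fun p => decide (p.2 < t'))) :=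
    filter_interval hpw (i + n - 1) t₀ t' h1 h2
  have hcne : (sub w i (i + n - 1)) ++ ((w.drop (i + n - 1)).takeWhile (fun p => decide (p.2 < t'))) ≠ [] := by
    intro h
    exact hs₀ne (List.append_eq_nil_iff.mp h).1
  refine ⟨v', liftW (shift (w.drop (i - 1)) (-t)), ?_, ?_⟩
  · -- membership in `ncatS (lang (A.locAcc ℓ) v) (TWl α)`
    have hB : IsTW (shift (w.drop j) (-(lastT (sub w i j)))) := by
      apply isTW_shift_suffix (a := sub w i j) (b := w.drop j)
      rw [← drop_eq_sub_append w (show i - 1 ≤ j by omega) hj]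
      exact isTW_drop hw _
    refine ⟨liftW (shift (sub w i j) (-t)), hx1,
      liftW (shift (w.drop j) (-(lastT (sub w i j)))),
      ⟨shift (w.drop j) (-(lastT (sub w i j))), hB, rfl⟩, ?_⟩
    rw [ncat_lift (sub w i j) (w.drop j) hsjne (-t),
      ← drop_eq_sub_append w (show i - 1 ≤ j by omega) hj]
  · -- membership in the second set
    have hX : liftW (shift (sub w i (i + n - 1)) (-t)) ∈ TWln α n := by
      refine ⟨shift (sub w i (i + n - 1)) (-t), ⟨isTW_shift_sub hw hi (by omega) (by omega) hti, ?_⟩, rfl⟩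
      simp only [shift, List.length_map]
      rw [sub_length w (by omega) (by omega)]
      omega
    have hY : shift (liftW (shift ((w.drop (i + n - 1)).takeWhile (fun p => decide (p.2 < t'))) (-t₀))) (t₀ - lastT (sub w i (i + n - 1)))
        ∈ hatS (minusDollar (lang A v')) := by
      refine ⟨liftW (shift ((w.drop (i + n - 1)).takeWhile (fun p => decide (p.2 < t'))) (-t₀)), ?_, t₀ - lastT (sub w i (i + n - 1)), by linarith, rfl⟩
      refine ⟨seg w t₀ t', hseg, by unfold seg; simp, ?_⟩
      unfold seg
      rw [List.dropLast_concat, hfilter]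
      simp [liftW, shift, List.map_map, Function.comp_def, sub_eq_add_neg]
    have hZ : liftW (shift ((w.drop (i + n - 1)).dropWhile (fun p => decide (p.2 < t'))) (-(lastT ((sub w i (i + n - 1)) ++ ((w.drop (i + n - 1)).takeWhile (fun p => decide (p.2 < t'))))))) ∈ TWl α := by
      refine ⟨shift ((w.drop (i + n - 1)).dropWhile (fun p => decide (p.2 < t'))) (-(lastT ((sub w i (i + n - 1)) ++ ((w.drop (i + n - 1)).takeWhile (fun p => decide (p.2 < t')))))), ?_, rfl⟩
      apply isTW_shift_suffix (a := (sub w i (i + n - 1)) ++ ((w.drop (i + n - 1)).takeWhile (fun p => decide (p.2 < t')))) (b := ((w.drop (i + n - 1)).dropWhile (fun p => decide (p.2 < t'))))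
      rw [List.append_assoc, List.takeWhile_append_dropWhile,
        ← drop_eq_sub_append w (show i - 1 ≤ i + n - 1 by omega) (show i + n - 1 ≤ w.length by omega)]
      exact isTW_drop hw _
    have ey : shift (liftW (shift ((w.drop (i + n - 1)).takeWhile (fun p => decide (p.2 < t'))) (-t₀))) (t₀ - lastT (sub w i (i + n - 1)))
        = liftW (shift ((w.drop (i + n - 1)).takeWhile (fun p => decide (p.2 < t'))) (-(lastT (sub w i (i + n - 1))))) := by
      rw [liftW_shift ((w.drop (i + n - 1)).takeWhile (fun p => decide (p.2 < t'))) (-t₀), shift_shift,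
        show -t₀ + (t₀ - lastT (sub w i (i + n - 1))) = -(lastT (sub w i (i + n - 1))) from by ring, ← liftW_shift]
    refine ⟨ncat (liftW (shift (sub w i (i + n - 1)) (-t)))
        (shift (liftW (shift ((w.drop (i + n - 1)).takeWhile (fun p => decide (p.2 < t'))) (-t₀))) (t₀ - lastT (sub w i (i + n - 1)))),
      ⟨liftW (shift (sub w i (i + n - 1)) (-t)), hX,
        shift (liftW (shift ((w.drop (i + n - 1)).takeWhile (fun p => decide (p.2 < t'))) (-t₀))) (t₀ - lastT (sub w i (i + n - 1))), hY, rfl⟩,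
      liftW (shift ((w.drop (i + n - 1)).dropWhile (fun p => decide (p.2 < t'))) (-(lastT ((sub w i (i + n - 1)) ++ ((w.drop (i + n - 1)).takeWhile (fun p => decide (p.2 < t'))))))), hZ, ?_⟩
    rw [ey, ncat_lift (sub w i (i + n - 1)) ((w.drop (i + n - 1)).takeWhile (fun p => decide (p.2 < t'))) hs₀ne (-t),
      ncat_lift ((sub w i (i + n - 1)) ++ ((w.drop (i + n - 1)).takeWhile (fun p => decide (p.2 < t')))) ((w.drop (i + n - 1)).dropWhile (fun p => decide (p.2 < t'))) hcne (-t), List.append_assoc,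
      List.takeWhile_append_dropWhile,
      ← drop_eq_sub_append w (show i - 1 ≤ i + n - 1 by omega) (show i + n - 1 ≤ w.length by omega)]


end PTPM
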